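/- In a Euclidean Hurwitz algebra, if u, v are orthonormal vectors orthogonal to 1, then the span of {1, u, v, u·v} is closed under multiplication, and multiplication restricted to this 4-dimensional subspace is associative. -/

import Mathlib

/-!
Polarizing `‖x * y‖ = ‖x‖ * ‖y‖` gives `⟪a * b, a * c⟫ = ‖a‖² ⟪b, c⟫`, its mirror image, and
their linearization `⟪a * b, c * d⟫ + ⟪c * b, a * d⟫ = 2 ⟪a, c⟫ ⟪b, d⟫`. For `x ⟂ 1` these force
`x * x = -‖x‖² 1`, `x * (x * y) = -‖x‖² y = (y * x) * x`, and `x * y = -y * x` when also `y ⟂ 1` and `x ⟂ y`.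
Hence `1, u, v, u * v` obey the multiplication table of `1, i, j, k`, so the linear map `ℍ → A`
sending one basis to the other is multiplicative. Its range is the span, which is therefore
closed under multiplication and associative because `ℍ` is.
-/

open scoped RealInnerProductSpace Quaternion

section HurwitzAlgebra

variable {A : Type*} [NormedAddCommGroup A] [InnerProductSpace ℝ A] {mul : A →ₗ[ℝ] A →ₗ[ℝ] A}

theorem inner_mul_mul_left (hmon : ∀ x y, ‖mul x y‖ = ‖x‖ * ‖y‖) (a b c : A) :
    ⟪mul a b, mul a c⟫ = ‖a‖ ^ 2 * ⟪b, c⟫ := by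
  rw [real_inner_eq_norm_add_mul_self_sub_norm_mul_self_sub_norm_mul_self_div_two,
    real_inner_eq_norm_add_mul_self_sub_norm_mul_self_sub_norm_mul_self_div_two b c,
    ← map_add, hmon, hmon, hmon]
  ring

theorem inner_mul_mul_right (hmon : ∀ x y, ‖mul x y‖ = ‖x‖ * ‖y‖) (a b c : A) :
    ⟪mul a c, mul b c⟫ = ⟪a, b⟫ * ‖c‖ ^ 2 := by
  rw [real_inner_eq_norm_add_mul_self_sub_norm_mul_self_sub_norm_mul_self_div_two,
    real_inner_eq_norm_add_mul_self_sub_norm_mul_self_sub_norm_mul_self_div_two a b,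
    ← LinearMap.add_apply, ← map_add, hmon, hmon, hmon]
  ring

theorem inner_mul_mul_add_inner_mul_mul_swap (hmon : ∀ x y, ‖mul x y‖ = ‖x‖ * ‖y‖)
    (a b c d : A) :
    ⟪mul a b, mul c d⟫ + ⟪mul c b, mul a d⟫ = 2 * ⟪a, c⟫ * ⟪b, d⟫ := by
  have hac := inner_mul_mul_left hmon (a + c) b d
  simp only [map_add, LinearMap.add_apply, inner_add_left, inner_add_right,
    inner_mul_mul_left hmon, norm_add_sq_real] at hac
  linarith

variable {e : A}

theorem inner_mul_self_eq (hmon : ∀ x y, ‖mul x y‖ = ‖x‖ * ‖y‖)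
    (hul : ∀ x, mul e x = x) (hur : ∀ x, mul x e = x) (x z : A) :
    ⟪mul x x, z⟫ = 2 * ⟪x, e⟫ * ⟪x, z⟫ - ‖x‖ ^ 2 * ⟪e, z⟫ := by
  have h := inner_mul_mul_add_inner_mul_mul_swap hmon x x e z
  have hx := inner_mul_mul_left hmon x e z
  rw [hul, hul] at h
  rw [hur] at hx
  linarith

theorem mul_self_of_inner_eq_zero (hmon : ∀ x y, ‖mul x y‖ = ‖x‖ * ‖y‖)
    (hul : ∀ x, mul e x = x) (hur : ∀ x, mul x e = x) {x : A} (hxe : ⟪x, e⟫ = 0) :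
    mul x x = -(‖x‖ ^ 2 • e) :=
  ext_inner_right ℝ fun z => by
    rw [inner_mul_self_eq hmon hul hur, hxe, inner_neg_left, real_inner_smul_left]
    ring

theorem mul_eq_neg_mul_swap (hmon : ∀ x y, ‖mul x y‖ = ‖x‖ * ‖y‖)
    (hul : ∀ x, mul e x = x) (hur : ∀ x, mul x e = x) {x y : A}
    (hxe : ⟪x, e⟫ = 0) (hye : ⟪y, e⟫ = 0) (hxy : ⟪x, y⟫ = 0) :
    mul x y = -mul y x := by
  have h := mul_self_of_inner_eq_zero hmon hul hur (x := x + y)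
    (by rw [inner_add_left, hxe, hye, add_zero])
  simp only [map_add, LinearMap.add_apply, mul_self_of_inner_eq_zero hmon hul hur hxe,
    mul_self_of_inner_eq_zero hmon hul hur hye, norm_add_sq_real, hxy] at h
  linear_combination (norm := module) h

theorem mul_mul_self_left (hmon : ∀ x y, ‖mul x y‖ = ‖x‖ * ‖y‖)
    (hul : ∀ x, mul e x = x) {x : A} (hxe : ⟪x, e⟫ = 0) (y : A) :
    mul x (mul x y) = -(‖x‖ ^ 2 • y) :=
  ext_inner_right ℝ fun z => by
    have h := inner_mul_mul_add_inner_mul_mul_swap hmon x (mul x y) e z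
    rw [hul, hul, hxe, inner_mul_mul_left hmon] at h
    rw [inner_neg_left, real_inner_smul_left]
    linarith

theorem mul_mul_self_right (hmon : ∀ x y, ‖mul x y‖ = ‖x‖ * ‖y‖)
    (hur : ∀ x, mul x e = x) {x : A} (hxe : ⟪x, e⟫ = 0) (y : A) :
    mul (mul y x) x = -(‖x‖ ^ 2 • y) :=
  ext_inner_right ℝ fun z => by
    have h := inner_mul_mul_add_inner_mul_mul_swap hmon (mul y x) x z e
    rw [hur, hur, hxe, inner_mul_mul_right hmon, real_inner_comm y z] at h
    rw [inner_neg_left, real_inner_smul_left]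
    linarith

theorem inner_mul_unit_eq_zero (hmon : ∀ x y, ‖mul x y‖ = ‖x‖ * ‖y‖)
    (hul : ∀ x, mul e x = x) (hur : ∀ x, mul x e = x) {x y : A}
    (hxe : ⟪x, e⟫ = 0) (hxy : ⟪x, y⟫ = 0) : ⟪mul x y, e⟫ = 0 := by
  have h := inner_mul_mul_add_inner_mul_mul_swap hmon x y e e
  rw [hul, hul, hur, hxe, real_inner_comm x y, hxy] at h
  linarith

theorem inner_mul_left_factor (hmon : ∀ x y, ‖mul x y‖ = ‖x‖ * ‖y‖)
    (hur : ∀ x, mul x e = x) (x y : A) : ⟪mul x y, x⟫ = ‖x‖ ^ 2 * ⟪y, e⟫ := by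
  simpa only [hur] using inner_mul_mul_left hmon x y e

theorem inner_mul_right_factor (hmon : ∀ x y, ‖mul x y‖ = ‖x‖ * ‖y‖)
    (hul : ∀ x, mul e x = x) (x y : A) : ⟪mul x y, y⟫ = ⟪x, e⟫ * ‖y‖ ^ 2 := by
  simpa only [hul] using inner_mul_mul_right hmon x e y

def quaternionMap (mul : A →ₗ[ℝ] A →ₗ[ℝ] A) (e u v : A) : ℍ[ℝ] →ₗ[ℝ] A where
  toFun q := q.re • e + q.imI • u + q.imJ • v + q.imK • mul u v
  map_add' p q := by
    simp only [Quaternion.re_add, Quaternion.imI_add, Quaternion.imJ_add, Quaternion.imK_add,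
      add_smul]
    abel
  map_smul' c q := by
    simp only [Quaternion.re_smul, Quaternion.imI_smul, Quaternion.imJ_smul, Quaternion.imK_smul,
      smul_add, mul_smul, RingHom.id_apply, smul_eq_mul]

theorem quaternionMap_apply (mul : A →ₗ[ℝ] A →ₗ[ℝ] A) (e u v : A) (q : ℍ[ℝ]) :
    quaternionMap mul e u v q = q.re • e + q.imI • u + q.imJ • v + q.imK • mul u v :=
  rfl

theorem quaternionMap_mk (mul : A →ₗ[ℝ] A →ₗ[ℝ] A) (e u v : A) (a b c d : ℝ) :
    quaternionMap mul e u v ⟨a, b, c, d⟩ = a • e + b • u + c • v + d • mul u v :=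
  rfl

theorem range_quaternionMap (mul : A →ₗ[ℝ] A →ₗ[ℝ] A) (e u v : A) :
    LinearMap.range (quaternionMap mul e u v) = Submodule.span ℝ {e, u, v, mul u v} := by
  apply le_antisymm
  · rintro _ ⟨q, rfl⟩
    rw [quaternionMap_apply]
    refine add_mem (add_mem (add_mem ?_ ?_) ?_) ?_ <;>
      exact Submodule.smul_mem _ _ (Submodule.subset_span (by simp))
  · simp only [Submodule.span_le, Set.insert_subset_iff, Set.singleton_subset_iff,
      SetLike.mem_coe, LinearMap.mem_range]
    refine ⟨⟨⟨1, 0, 0, 0⟩, ?_⟩, ⟨⟨0, 1, 0, 0⟩, ?_⟩, ⟨⟨0, 0, 1, 0⟩, ?_⟩, ⟨⟨0, 0, 0, 1⟩, ?_⟩⟩ <;>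
      rw [quaternionMap_mk] <;> module

theorem quaternionMap_mul (hmon : ∀ x y, ‖mul x y‖ = ‖x‖ * ‖y‖)
    (hul : ∀ x, mul e x = x) (hur : ∀ x, mul x e = x) {u v : A} (hu : ‖u‖ = 1) (hv : ‖v‖ = 1)
    (hue : ⟪u, e⟫ = 0) (hve : ⟪v, e⟫ = 0) (huv : ⟪u, v⟫ = 0) (p q : ℍ[ℝ]) :
    quaternionMap mul e u v (p * q) =
      mul (quaternionMap mul e u v p) (quaternionMap mul e u v q) := by
  have hw : ‖mul u v‖ = 1 := by rw [hmon, hu, hv, one_mul]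
  have hwe : ⟪mul u v, e⟫ = 0 := inner_mul_unit_eq_zero hmon hul hur hue huv
  have hwu_orth : ⟪mul u v, u⟫ = 0 := by rw [inner_mul_left_factor hmon hur, hve, mul_zero]
  have hwv_orth : ⟪mul u v, v⟫ = 0 := by rw [inner_mul_right_factor hmon hul, hue, zero_mul]
  have huu : mul u u = -e := by simpa [hu] using mul_self_of_inner_eq_zero hmon hul hur hue
  have hvv : mul v v = -e := by simpa [hv] using mul_self_of_inner_eq_zero hmon hul hur hve
  have hww : mul (mul u v) (mul u v) = -e := by
    simpa [hw] using mul_self_of_inner_eq_zero hmon hul hur hwe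
  have huw : mul u (mul u v) = -v := by simpa [hu] using mul_mul_self_left hmon hul hue v
  have hwv : mul (mul u v) v = -u := by simpa [hv] using mul_mul_self_right hmon hur hve u
  have hvu : mul v u = -mul u v :=
    mul_eq_neg_mul_swap hmon hul hur hve hue (by rw [real_inner_comm]; exact huv)
  have hwu : mul (mul u v) u = v := by
    rw [mul_eq_neg_mul_swap hmon hul hur hwe hue hwu_orth, huw, neg_neg]
  have hvw : mul v (mul u v) = u := by
    rw [mul_eq_neg_mul_swap hmon hul hur hve hwe (by rw [real_inner_comm]; exact hwv_orth), hwv, neg_neg]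
  simp only [quaternionMap_apply, Quaternion.re_mul, Quaternion.imI_mul, Quaternion.imJ_mul,
    Quaternion.imK_mul, map_add, map_smul, LinearMap.add_apply, LinearMap.smul_apply,
    hul, hur, huu, hvv, hww, huw, hwv, hvu, hwu, hvw]
  module

end HurwitzAlgebra

theorem stmt_15_general {A : Type*} [NormedAddCommGroup A] [InnerProductSpace ℝ A]
    (mul : A →ₗ[ℝ] A →ₗ[ℝ] A) (e : A)
    (hul : ∀ x, mul e x = x) (hur : ∀ x, mul x e = x)
    (hmon : ∀ x y, ‖mul x y‖ = ‖x‖ * ‖y‖)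
    (u v : A) (hu : ‖u‖ = 1) (hv : ‖v‖ = 1)
    (hue : (inner ℝ u e : ℝ) = 0) (hve : (inner ℝ v e : ℝ) = 0)
    (huv : (inner ℝ u v : ℝ) = 0) :
    (∀ x y : A, x ∈ Submodule.span ℝ {e, u, v, mul u v} →
        y ∈ Submodule.span ℝ {e, u, v, mul u v} →
        mul x y ∈ Submodule.span ℝ {e, u, v, mul u v}) ∧
    (∀ x y z : A, x ∈ Submodule.span ℝ {e, u, v, mul u v} →
        y ∈ Submodule.span ℝ {e, u, v, mul u v} →
        z ∈ Submodule.span ℝ {e, u, v, mul u v} →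
        mul (mul x y) z = mul x (mul y z)) := by
  have hmul := quaternionMap_mul hmon hul hur hu hv hue hve huv
  rw [← range_quaternionMap]
  constructor
  · rintro _ _ ⟨p, rfl⟩ ⟨q, rfl⟩
    exact ⟨p * q, hmul p q⟩
  · rintro _ _ _ ⟨p, rfl⟩ ⟨q, rfl⟩ ⟨r, rfl⟩
    rw [← hmul, ← hmul, ← hmul, ← hmul, mul_assoc]

theorem stmt_15 {A : Type*} [NormedAddCommGroup A] [InnerProductSpace ℝ A]
    (mul : A →ₗ[ℝ] A →ₗ[ℝ] A) (e : A) (he : ‖e‖ = 1)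
    (hul : ∀ x, mul e x = x) (hur : ∀ x, mul x e = x)
    (hmon : ∀ x y, ‖mul x y‖ = ‖x‖ * ‖y‖)
    (u v : A) (hu : ‖u‖ = 1) (hv : ‖v‖ = 1)
    (hue : (inner ℝ u e : ℝ) = 0) (hve : (inner ℝ v e : ℝ) = 0)
    (huv : (inner ℝ u v : ℝ) = 0) :
    (∀ x y : A, x ∈ Submodule.span ℝ {e, u, v, mul u v} →
        y ∈ Submodule.span ℝ {e, u, v, mul u v} →
        mul x y ∈ Submodule.span ℝ {e, u, v, mul u v}) ∧
    (∀ x y z : A, x ∈ Submodule.span ℝ {e, u, v, mul u v} →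
        y ∈ Submodule.span ℝ {e, u, v, mul u v} →
        z ∈ Submodule.span ℝ {e, u, v, mul u v} →
        mul (mul x y) z = mul x (mul y z)) :=
  stmt_15_general mul e hul hur hmon u v hu hv hue hve huv
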